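/- Weak Regularity Lemma for graphons: For every graphon W : [0,1]² → [0,1] (a symmetric Lebesgue-measurable function) and every natural number K ≥ 2, there exists a measurable partition P = (P₁, …, P_K) of [0,1] into K measurable subsets and real numbers w_{kk'} ∈ [0,1] with w_{kk'} = w_{k'k}, such that the step function W_P(x,y) = Σ_{k,k'=1}^K w_{kk'} 𝟙_{P_k × P_{k'}}(x,y) satisfies ‖W − W_P‖_□ ≤ 2/√(log K), where ‖·‖_□ denotes the cut norm. -/

import Mathlib

/-!
Energy increment (Frieze–Kannan). For a measurable partition `A` of `Ω`, let `W_A` be the step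
function whose value on `A i × A j` is the average of `W` there, and call `‖W_A‖₂² ≤ 1` the energy
of `A`. If `|∫_{S×T} (W - W_A)| > ε`, refining `A` by `S` and by `T` multiplies the number of cells
by `4` and raises the energy by more than `ε²`: by Pythagoras the gain is `‖W_Q - W_A‖₂²`, and
since `S × T` is a union of blocks of the refinement `Q`, Cauchy–Schwarz bounds the cut integral
by its square root. So within `t > 1/ε²` refinements some partition into at most `4^t` cells is
`ε`-close to `W` in cut norm. For `ε = 2/√(log K)` one can take `4^t ≤ K` (when `log K > 4`;
otherwise `ε ≥ 1` and any partition will do), and pad the partition with empty cells.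
-/

open MeasureTheory Set Function

namespace Graphon

variable {X ι κ : Type*} {Ω S T : Set X} {A : ι → Set X} {Q : κ → Set X} {π : κ → ι}

def refine (A : ι → Set X) (S : Set X) (p : ι × Bool) : Set X :=
  A p.1 ∩ if p.2 then S else Sᶜ

theorem iUnion_refine_fst_mem [Fintype ι] [DecidableEq ι] (A : ι → Set X) (S : Set X)
    (s : Finset ι) :
    ⋃ p ∈ Finset.univ.filter (·.1 ∈ s), refine A S p = ⋃ i ∈ s, A i := by
  classical
  ext x
  simp only [refine, mem_iUnion, mem_inter_iff, Finset.mem_filter, Finset.mem_univ, true_and,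
    Prod.exists, exists_prop]
  exact ⟨fun ⟨i, _, hi, hx, _⟩ => ⟨i, hi, hx⟩,
    fun ⟨i, hi, hx⟩ => ⟨i, decide (x ∈ S), hi, hx, by by_cases h : x ∈ S <;> simp [h]⟩⟩

theorem mem_extend_empty_iff {e : ι → κ} (he : Injective e) {x : X} {k : κ} :
    x ∈ extend e A (fun _ => ∅) k ↔ ∃ i, e i = k ∧ x ∈ A i := by
  by_cases hk : ∃ i, e i = k
  · obtain ⟨i, rfl⟩ := hk
    simp [he.extend_apply, he.eq_iff]
  · rw [extend_apply' _ _ _ hk]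
    simpa using fun i hi => absurd ⟨i, hi⟩ hk

theorem sum_sum_comp_mul [Fintype ι] [Fintype κ] [DecidableEq ι] (π : κ → ι) (F : ι → ι → ℝ)
    (G : κ → κ → ℝ) :
    ∑ k, ∑ l, F (π k) (π l) * G k l =
      ∑ i, ∑ j, F i j * ∑ k with π k = i, ∑ l with π l = j, G k l := by
  simp_rw [Finset.mul_sum]
  rw [← Finset.sum_fiberwise Finset.univ π fun k => ∑ l, F (π k) (π l) * G k l]
  refine Finset.sum_congr rfl fun i _ => ?_
  rw [Finset.sum_comm (γ := ι)]
  refine Finset.sum_congr rfl fun k hk => ?_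
  rw [← Finset.sum_fiberwise Finset.univ π fun l => F (π k) (π l) * G k l,
    (Finset.mem_filter.1 hk).2]
  exact Finset.sum_congr rfl fun j _ => Finset.sum_congr rfl fun l hl => by
    rw [(Finset.mem_filter.1 hl).2]

theorem exists_four_pow_le_of_four_lt_log {K : ℕ} (hK : 4 < Real.log K) :
    ∃ t : ℕ, Real.log K / 4 < t ∧ 4 ^ t ≤ K := by
  have hK0 : (0 : ℝ) < K :=
    Nat.cast_pos.2 <| Nat.pos_of_ne_zero fun h => by simp [h] at hK; linarith
  refine ⟨⌊Real.log K / 4⌋₊ + 1, by push_cast; exact Nat.lt_floor_add_one _, ?_⟩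
  have hfloor := Nat.floor_le (div_nonneg (by linarith : (0 : ℝ) ≤ Real.log K) zero_le_four)
  have hlog4 : Real.log 4 < 2 := by
    rw [show (4 : ℝ) = 2 ^ 2 by norm_num, Real.log_pow]
    push_cast
    linarith [Real.log_two_lt_d9]
  have hlog : Real.log ((4 : ℝ) ^ (⌊Real.log K / 4⌋₊ + 1)) ≤ Real.log K := by
    rw [Real.log_pow]
    push_cast
    nlinarith [Real.log_pos (by norm_num : (1 : ℝ) < 4), hfloor, hlog4]
  exact_mod_cast (Real.log_le_log_iff (by positivity) hK0).1 hlog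

variable [MeasurableSpace X] {μ : Measure X} {W : X → X → ℝ}

structure IsMeasurablePartition (A : ι → Set X) (Ω : Set X) : Prop where
  measurableSet : ∀ i, MeasurableSet (A i)
  pairwiseDisjoint : Pairwise (Disjoint on A)
  iUnion_eq : ⋃ i, A i = Ω

namespace IsMeasurablePartition

theorem subset (hA : IsMeasurablePartition A Ω) (i : ι) : A i ⊆ Ω :=
  hA.iUnion_eq ▸ subset_iUnion A i

theorem eq_of_mem_of_mem (hA : IsMeasurablePartition A Ω) {x : X} {i j : ι} (hi : x ∈ A i)
    (hj : x ∈ A j) : i = j :=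
  by_contra fun hij => disjoint_left.1 (hA.pairwiseDisjoint hij) hi hj

theorem exists_mem (hA : IsMeasurablePartition A Ω) {x : X} (hx : x ∈ Ω) : ∃ i, x ∈ A i :=
  mem_iUnion.1 (hA.iUnion_eq ▸ hx)

theorem setIntegral_biUnion_prod_biUnion (hA : IsMeasurablePartition A Ω) {f : X × X → ℝ}
    (hf : IntegrableOn f (Ω ×ˢ Ω) (μ.prod μ)) (s t : Finset ι) :
    ∫ p in (⋃ i ∈ s, A i) ×ˢ (⋃ j ∈ t, A j), f p ∂μ.prod μ =
      ∑ i ∈ s, ∑ j ∈ t, ∫ p in A i ×ˢ A j, f p ∂μ.prod μ := by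
  rw [iUnion₂_prod_const, integral_biUnion_finset]
  · refine Finset.sum_congr rfl fun i _ => ?_
    rw [prod_iUnion₂, integral_biUnion_finset]
    · exact fun j _ => (hA.measurableSet i).prod (hA.measurableSet j)
    · exact fun j _ j' _ hjj' => Disjoint.set_prod_right (hA.pairwiseDisjoint hjj') _ _
    · exact fun j _ => hf.mono_set (prod_mono (hA.subset i) (hA.subset j))
  · exact fun i _ => (hA.measurableSet i).prod
      (Finset.measurableSet_biUnion _ fun j _ => hA.measurableSet j)
  · exact fun i _ i' _ hii' => Disjoint.set_prod_left (hA.pairwiseDisjoint hii') _ _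
  · exact fun i _ => hf.mono_set (prod_mono (hA.subset i) (iUnion₂_subset fun j _ => hA.subset j))

theorem iUnion_fiber [Fintype κ] [DecidableEq ι] (hA : IsMeasurablePartition A Ω)
    (hQ : IsMeasurablePartition Q Ω) (hQA : ∀ k, Q k ⊆ A (π k)) (i : ι) :
    ⋃ k ∈ Finset.univ.filter (π · = i), Q k = A i := by
  refine Subset.antisymm (iUnion₂_subset fun k hk => (Finset.mem_filter.1 hk).2 ▸ hQA k) ?_
  intro x hx
  obtain ⟨k, hk⟩ := hQ.exists_mem (hA.subset i hx)
  exact mem_biUnion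
    (Finset.mem_filter.2 ⟨Finset.mem_univ k, hA.eq_of_mem_of_mem (hQA k hk) hx⟩) hk

theorem sum_fiber_measureReal [Fintype κ] [DecidableEq ι] [IsFiniteMeasure μ]
    (hA : IsMeasurablePartition A Ω) (hQ : IsMeasurablePartition Q Ω) (hQA : ∀ k, Q k ⊆ A (π k))
    (i : ι) :
    ∑ k with π k = i, μ.real (Q k) = μ.real (A i) := by
  rw [← hA.iUnion_fiber hQ hQA i, measureReal_biUnion_finset
    (hQ.pairwiseDisjoint.set_pairwise _) fun k _ => hQ.measurableSet k]

theorem sum_fiber_setIntegral [Fintype κ] [DecidableEq ι] (hA : IsMeasurablePartition A Ω)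
    (hQ : IsMeasurablePartition Q Ω) (hQA : ∀ k, Q k ⊆ A (π k)) {f : X × X → ℝ}
    (hf : IntegrableOn f (Ω ×ˢ Ω) (μ.prod μ)) (i j : ι) :
    ∑ k with π k = i, ∑ l with π l = j, ∫ p in Q k ×ˢ Q l, f p ∂μ.prod μ =
      ∫ p in A i ×ˢ A j, f p ∂μ.prod μ := by
  rw [← hQ.setIntegral_biUnion_prod_biUnion hf, hA.iUnion_fiber hQ hQA,
    hA.iUnion_fiber hQ hQA]

end IsMeasurablePartition

theorem isMeasurablePartition_const [Unique ι] (hΩ : MeasurableSet Ω) :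
    IsMeasurablePartition (fun _ : ι => Ω) Ω :=
  ⟨fun _ => hΩ, Subsingleton.pairwise, iUnion_const Ω⟩

theorem IsMeasurablePartition.refine (hA : IsMeasurablePartition A Ω) (hS : MeasurableSet S) :
    IsMeasurablePartition (refine A S) Ω where
  measurableSet p := (hA.measurableSet p.1).inter (by split_ifs <;> simp [hS])
  pairwiseDisjoint := by
    rintro ⟨i, a⟩ ⟨j, b⟩ hne
    refine disjoint_left.2 fun x ⟨hxi, hxa⟩ ⟨hxj, hxb⟩ => ?_
    obtain rfl := hA.eq_of_mem_of_mem hxi hxj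
    cases a <;> cases b <;> simp_all
  iUnion_eq := by
    classical
    rw [← hA.iUnion_eq]
    ext x
    simp only [Graphon.refine, mem_iUnion, mem_inter_iff, Prod.exists]
    exact ⟨fun ⟨i, _, hi, _⟩ => ⟨i, hi⟩,
      fun ⟨i, hi⟩ => ⟨i, decide (x ∈ S), hi, by by_cases h : x ∈ S <;> simp [h]⟩⟩

def CutNormLE (μ : Measure X) (Ω : Set X) (U : X × X → ℝ) (ε : ℝ) : Prop :=
  ∀ S T : Set X, MeasurableSet S → MeasurableSet T → S ⊆ Ω → T ⊆ Ω →
    |∫ p in S ×ˢ T, U p ∂μ.prod μ| ≤ ε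

theorem CutNormLE.mono {U : X × X → ℝ} {ε δ : ℝ} (h : CutNormLE μ Ω U ε) (hεδ : ε ≤ δ) :
    CutNormLE μ Ω U δ :=
  fun S T hS hT hSΩ hTΩ => (h S T hS hT hSΩ hTΩ).trans hεδ

theorem abs_setIntegral_prod_le_of_abs_le_one [IsFiniteMeasure μ] {f : X × X → ℝ}
    (hf : ∀ p ∈ S ×ˢ T, |f p| ≤ 1) :
    |∫ p in S ×ˢ T, f p ∂μ.prod μ| ≤ μ.real S * μ.real T := by
  simpa [measureReal_prod_prod] using
    norm_setIntegral_le_of_norm_le_const (f := f) (C := 1) (measure_lt_top (μ.prod μ) (S ×ˢ T))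
      (by simpa using hf)

theorem integrableOn_uncurry_of_mem_Icc [IsFiniteMeasure μ] (hΩ : MeasurableSet Ω)
    (hWm : Measurable (uncurry W)) (hW : ∀ x ∈ Ω, ∀ y ∈ Ω, W x y ∈ Icc 0 1) :
    IntegrableOn (uncurry W) (Ω ×ˢ Ω) (μ.prod μ) := by
  refine Measure.integrableOn_of_bounded (M := 1) (measure_ne_top _ _) hWm.aestronglyMeasurable
    (ae_restrict_of_forall_mem (hΩ.prod hΩ) fun p hp => ?_)
  obtain ⟨h0, h1⟩ := hW p.1 hp.1 p.2 hp.2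
  change |W p.1 p.2| ≤ 1
  exact abs_le.2 ⟨by linarith, h1⟩

theorem setIntegral_prod_restrict_of_subset [SFinite μ] (hS : MeasurableSet S)
    (hT : MeasurableSet T) (hSΩ : S ⊆ Ω) (hTΩ : T ⊆ Ω) (f : X × X → ℝ) :
    ∫ p in S ×ˢ T, f p ∂(μ.restrict Ω).prod (μ.restrict Ω) = ∫ p in S ×ˢ T, f p ∂μ.prod μ := by
  rw [Measure.prod_restrict, Measure.restrict_restrict (hS.prod hT),
    inter_eq_left.2 (prod_mono hSΩ hTΩ)]

/-- On a null block this is `0`, since `x / 0 = 0`. -/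
noncomputable def blockAvg (μ : Measure X) (W : X → X → ℝ) (A : ι → Set X) (i j : ι) : ℝ :=
  (∫ p in A i ×ˢ A j, uncurry W p ∂μ.prod μ) / (μ.real (A i) * μ.real (A j))

theorem blockAvg_mul_measureReal [IsFiniteMeasure μ] (W : X → X → ℝ) (A : ι → Set X) (i j : ι) :
    blockAvg μ W A i j * (μ.real (A i) * μ.real (A j)) =
      ∫ p in A i ×ˢ A j, uncurry W p ∂μ.prod μ := by
  by_cases h : μ.real (A i) * μ.real (A j) = 0
  · rw [← measureReal_prod_prod, measureReal_eq_zero_iff] at h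
    rw [← measureReal_prod_prod, setIntegral_measure_zero _ h, measureReal_def, h,
      ENNReal.toReal_zero, mul_zero]
  · exact div_mul_cancel₀ _ h

theorem blockAvg_mem_Icc [IsFiniteMeasure μ] (hA : IsMeasurablePartition A Ω)
    (hW : ∀ x ∈ Ω, ∀ y ∈ Ω, W x y ∈ Icc 0 1) (i j : ι) : blockAvg μ W A i j ∈ Icc 0 1 := by
  have hblock : ∀ p ∈ A i ×ˢ A j, uncurry W p ∈ Icc 0 1 :=
    fun p hp => hW _ (hA.subset i hp.1) _ (hA.subset j hp.2)
  have hnonneg : 0 ≤ ∫ p in A i ×ˢ A j, uncurry W p ∂μ.prod μ :=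
    setIntegral_nonneg ((hA.measurableSet i).prod (hA.measurableSet j)) fun p hp => (hblock p hp).1
  have hle : ∫ p in A i ×ˢ A j, uncurry W p ∂μ.prod μ ≤ μ.real (A i) * μ.real (A j) :=
    (le_abs_self _).trans <| abs_setIntegral_prod_le_of_abs_le_one fun p hp =>
      abs_le.2 ⟨by linarith [(hblock p hp).1], (hblock p hp).2⟩
  exact ⟨div_nonneg hnonneg (hnonneg.trans hle), div_le_one_of_le₀ hle (hnonneg.trans hle)⟩

theorem blockAvg_comm [SFinite μ] (hW : ∀ x y, W x y = W y x) (A : ι → Set X) (i j : ι) :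
    blockAvg μ W A i j = blockAvg μ W A j i := by
  rw [blockAvg, blockAvg, mul_comm, ← setIntegral_prod_swap]
  simp only [uncurry, Prod.fst_swap, Prod.snd_swap, hW]

variable [Fintype ι]

theorem IsMeasurablePartition.iUnion_refine_snd (hA : IsMeasurablePartition A Ω)
    (hSΩ : S ⊆ Ω) :
    ⋃ p ∈ Finset.univ.filter (·.2), Graphon.refine A S p = S := by
  refine Subset.antisymm (iUnion₂_subset fun p hp => ?_) fun x hx => ?_
  · rw [Graphon.refine, if_pos (Finset.mem_filter.1 hp).2]
    exact inter_subset_right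
  · obtain ⟨i, hi⟩ := hA.exists_mem (hSΩ hx)
    exact mem_biUnion (x := (i, true)) (by simp) ⟨hi, by simpa using hx⟩

theorem IsMeasurablePartition.extend (hA : IsMeasurablePartition A Ω) {e : ι → κ}
    (he : Injective e) : IsMeasurablePartition (Function.extend e A fun _ => ∅) Ω where
  measurableSet k := by
    have : Function.extend e A (fun _ => ∅) k = ⋃ (i) (_ : e i = k), A i := by
      ext x; simp [mem_extend_empty_iff he]
    rw [this]
    exact MeasurableSet.iUnion fun i => MeasurableSet.iUnion fun _ => hA.measurableSet i
  pairwiseDisjoint k k' hkk' := disjoint_left.2 fun x hx hx' => by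
    obtain ⟨i, rfl, hi⟩ := (mem_extend_empty_iff he).1 hx
    obtain ⟨i', rfl, hi'⟩ := (mem_extend_empty_iff he).1 hx'
    exact hkk' (congrArg e (hA.eq_of_mem_of_mem hi hi'))
  iUnion_eq := by
    rw [← hA.iUnion_eq]
    ext x
    simp [mem_extend_empty_iff he]

theorem IsMeasurablePartition.sum_measureReal [IsFiniteMeasure μ]
    (hA : IsMeasurablePartition A Ω) : ∑ i, μ.real (A i) = μ.real Ω := by
  rw [← hA.iUnion_eq, measureReal_iUnion_fintype hA.pairwiseDisjoint hA.measurableSet]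

noncomputable def stepApprox (μ : Measure X) (W : X → X → ℝ) (A : ι → Set X) (p : X × X) : ℝ :=
  ∑ i, ∑ j, (A i ×ˢ A j).indicator (fun _ => blockAvg μ W A i j) p

theorem stepApprox_eq_blockAvg (hA : IsMeasurablePartition A Ω) {i j : ι} {p : X × X}
    (hp : p ∈ A i ×ˢ A j) : stepApprox μ W A p = blockAvg μ W A i j := by
  rw [stepApprox, Finset.sum_eq_single i, Finset.sum_eq_single j, indicator_of_mem hp]
  · exact fun j' _ hj' => indicator_of_notMem (fun h => hj' (hA.eq_of_mem_of_mem h.2 hp.2)) _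
  · simp
  · exact fun i' _ hi' => Finset.sum_eq_zero fun j' _ =>
      indicator_of_notMem (fun h => hi' (hA.eq_of_mem_of_mem h.1 hp.1)) _
  · simp

theorem stepApprox_mem_Icc [IsFiniteMeasure μ] (hA : IsMeasurablePartition A Ω)
    (hW : ∀ x ∈ Ω, ∀ y ∈ Ω, W x y ∈ Icc 0 1) {p : X × X} (hp : p ∈ Ω ×ˢ Ω) :
    stepApprox μ W A p ∈ Icc 0 1 := by
  obtain ⟨i, hi⟩ := hA.exists_mem hp.1
  obtain ⟨j, hj⟩ := hA.exists_mem hp.2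
  rw [stepApprox_eq_blockAvg hA (mk_mem_prod hi hj)]
  exact blockAvg_mem_Icc hA hW i j

theorem integrable_stepApprox [IsFiniteMeasure μ] (hA : IsMeasurablePartition A Ω) :
    Integrable (stepApprox μ W A) (μ.prod μ) :=
  integrable_finsetSum _ fun i _ => integrable_finsetSum _ fun j _ =>
    (integrable_const _).indicator ((hA.measurableSet i).prod (hA.measurableSet j))

theorem setIntegral_stepApprox_of_subset [IsFiniteMeasure μ] (hA : IsMeasurablePartition A Ω)
    {E : Set (X × X)} (hE : MeasurableSet E) {i j : ι} (hEA : E ⊆ A i ×ˢ A j) :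
    ∫ p in E, stepApprox μ W A p ∂μ.prod μ = blockAvg μ W A i j * (μ.prod μ).real E := by
  rw [setIntegral_congr_fun hE fun p hp => stepApprox_eq_blockAvg hA (hEA hp), setIntegral_const,
    smul_eq_mul, mul_comm]

theorem setIntegral_sub_stepApprox_of_refines [IsFiniteMeasure μ]
    (hA : IsMeasurablePartition A Ω) (hQ : IsMeasurablePartition Q Ω) (hQA : ∀ k, Q k ⊆ A (π k))
    (hWi : IntegrableOn (uncurry W) (Ω ×ˢ Ω) (μ.prod μ)) (k l : κ) :
    ∫ p in Q k ×ˢ Q l, (uncurry W - stepApprox μ W A) p ∂μ.prod μ =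
      (blockAvg μ W Q k l - blockAvg μ W A (π k) (π l)) * (μ.real (Q k) * μ.real (Q l)) := by
  have hQkl := (hQ.measurableSet k).prod (hQ.measurableSet l)
  rw [Pi.sub_def, integral_sub (hWi.mono_set (prod_mono (hQ.subset k) (hQ.subset l)))
      (integrable_stepApprox hA).integrableOn,
    setIntegral_stepApprox_of_subset hA hQkl (prod_mono (hQA k) (hQA l)), measureReal_prod_prod,
    ← blockAvg_mul_measureReal, sub_mul]

theorem stepApprox_extend_empty [Fintype κ] {e : ι → κ} (he : Injective e) :
    stepApprox μ W (extend e A fun _ => ∅) = stepApprox μ W A := by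
  funext p
  have hzero : ∀ k ∉ range e, extend e A (fun _ => ∅) k = ∅ :=
    fun k hk => extend_apply' _ _ _ hk
  refine (Fintype.sum_of_injective e he _ _ (fun k hk => ?_) fun i => ?_).symm
  · exact Finset.sum_eq_zero fun k' _ => by rw [hzero k hk, empty_prod, indicator_empty]
  refine Fintype.sum_of_injective e he _ _ (fun k' hk' => ?_) fun j => ?_
  · rw [hzero k' hk', prod_empty, indicator_empty]
  · simp only [blockAvg, he.extend_apply]

noncomputable def energy (μ : Measure X) (W : X → X → ℝ) (A : ι → Set X) : ℝ :=
  ∑ i, ∑ j, blockAvg μ W A i j ^ 2 * (μ.real (A i) * μ.real (A j))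

theorem energy_nonneg : 0 ≤ energy μ W A :=
  Finset.sum_nonneg fun _ _ => Finset.sum_nonneg fun _ _ =>
    mul_nonneg (sq_nonneg _) (mul_nonneg measureReal_nonneg measureReal_nonneg)

theorem energy_le_one [IsProbabilityMeasure μ] (hA : IsMeasurablePartition A Ω)
    (hW : ∀ x ∈ Ω, ∀ y ∈ Ω, W x y ∈ Icc 0 1) : energy μ W A ≤ 1 :=
  calc energy μ W A ≤ ∑ i, ∑ j, μ.real (A i) * μ.real (A j) := by
        refine Finset.sum_le_sum fun i _ => Finset.sum_le_sum fun j _ => ?_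
        have hc := blockAvg_mem_Icc (μ := μ) hA hW i j
        exact mul_le_of_le_one_left (mul_nonneg measureReal_nonneg measureReal_nonneg)
          (pow_le_one₀ hc.1 hc.2)
    _ = μ.real Ω ^ 2 := by rw [← Finset.sum_mul_sum, hA.sum_measureReal, sq]
    _ ≤ 1 := pow_le_one₀ measureReal_nonneg measureReal_le_one

/-- Pythagoras: `W_Q - W_A` is orthogonal to `W_A`, because on each block of `A` the block
averages of `Q`, weighted by mass, average out to that of `A` (`hmean`). -/
theorem energy_eq_add_of_refines [Fintype κ] [IsFiniteMeasure μ]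
    (hA : IsMeasurablePartition A Ω) (hQ : IsMeasurablePartition Q Ω) (hQA : ∀ k, Q k ⊆ A (π k))
    (hWi : IntegrableOn (uncurry W) (Ω ×ˢ Ω) (μ.prod μ)) :
    energy μ W Q = energy μ W A + ∑ k, ∑ l,
      (blockAvg μ W Q k l - blockAvg μ W A (π k) (π l)) ^ 2 * (μ.real (Q k) * μ.real (Q l)) := by
  classical
  have hmass : ∀ i j, ∑ k with π k = i, ∑ l with π l = j, μ.real (Q k) * μ.real (Q l) =
      μ.real (A i) * μ.real (A j) := fun i j => by
    rw [← Finset.sum_mul_sum, hA.sum_fiber_measureReal hQ hQA, hA.sum_fiber_measureReal hQ hQA]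
  have hmean : ∀ i j, ∑ k with π k = i, ∑ l with π l = j,
      blockAvg μ W Q k l * (μ.real (Q k) * μ.real (Q l)) =
        blockAvg μ W A i j * (μ.real (A i) * μ.real (A j)) := fun i j => by
    simp_rw [blockAvg_mul_measureReal]
    exact hA.sum_fiber_setIntegral hQ hQA hWi i j
  have hsq : ∑ k, ∑ l, blockAvg μ W A (π k) (π l) ^ 2 * (μ.real (Q k) * μ.real (Q l)) =
      energy μ W A := by
    rw [sum_sum_comp_mul π (fun i j => blockAvg μ W A i j ^ 2)]
    simp_rw [hmass, energy]
  have hcross : ∑ k, ∑ l, blockAvg μ W A (π k) (π l) *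
      (blockAvg μ W Q k l * (μ.real (Q k) * μ.real (Q l))) = energy μ W A := by
    rw [sum_sum_comp_mul π (blockAvg μ W A)]
    simp_rw [hmean, energy]
    exact Finset.sum_congr rfl fun i _ => Finset.sum_congr rfl fun j _ => by ring
  have hexpand : ∑ k, ∑ l, (blockAvg μ W Q k l - blockAvg μ W A (π k) (π l)) ^ 2 *
      (μ.real (Q k) * μ.real (Q l)) = energy μ W Q - 2 * ∑ k, ∑ l, blockAvg μ W A (π k) (π l) *
        (blockAvg μ W Q k l * (μ.real (Q k) * μ.real (Q l))) +
      ∑ k, ∑ l, blockAvg μ W A (π k) (π l) ^ 2 * (μ.real (Q k) * μ.real (Q l)) := by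
    simp only [energy, Finset.mul_sum, ← Finset.sum_sub_distrib, ← Finset.sum_add_distrib]
    exact Finset.sum_congr rfl fun k _ => Finset.sum_congr rfl fun l _ => by ring
  linarith

theorem energy_le_energy_of_refines [Fintype κ] [IsFiniteMeasure μ]
    (hA : IsMeasurablePartition A Ω) (hQ : IsMeasurablePartition Q Ω) (hQA : ∀ k, Q k ⊆ A (π k))
    (hWi : IntegrableOn (uncurry W) (Ω ×ˢ Ω) (μ.prod μ)) : energy μ W A ≤ energy μ W Q := by
  rw [energy_eq_add_of_refines hA hQ hQA hWi]
  exact le_add_of_nonneg_right <| Finset.sum_nonneg fun _ _ => Finset.sum_nonneg fun _ _ =>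
    mul_nonneg (sq_nonneg _) (mul_nonneg measureReal_nonneg measureReal_nonneg)

/-- Cauchy–Schwarz over the blocks of `Q` that make up `S × T`, then Pythagoras. -/
theorem sq_setIntegral_sub_stepApprox_le [Fintype κ] [IsFiniteMeasure μ]
    (hA : IsMeasurablePartition A Ω) (hQ : IsMeasurablePartition Q Ω) (hQA : ∀ k, Q k ⊆ A (π k))
    (hWi : IntegrableOn (uncurry W) (Ω ×ˢ Ω) (μ.prod μ)) (s t : Finset κ) :
    (∫ p in (⋃ k ∈ s, Q k) ×ˢ (⋃ l ∈ t, Q l), (uncurry W - stepApprox μ W A) p ∂μ.prod μ) ^ 2 ≤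
      μ.real (⋃ k ∈ s, Q k) * μ.real (⋃ l ∈ t, Q l) * (energy μ W Q - energy μ W A) := by
  have hdisj := hQ.pairwiseDisjoint.set_pairwise
  rw [hQ.setIntegral_biUnion_prod_biUnion (hWi.sub (integrable_stepApprox hA).integrableOn),
    measureReal_biUnion_finset (hdisj _) fun k _ => hQ.measurableSet k,
    measureReal_biUnion_finset (hdisj _) fun k _ => hQ.measurableSet k,
    energy_eq_add_of_refines hA hQ hQA hWi, add_sub_cancel_left]
  simp_rw [setIntegral_sub_stepApprox_of_refines hA hQ hQA hWi]
  set d : κ × κ → ℝ := fun kl => blockAvg μ W Q kl.1 kl.2 - blockAvg μ W A (π kl.1) (π kl.2)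
  set m : κ × κ → ℝ := fun kl => μ.real (Q kl.1) * μ.real (Q kl.2)
  have hm : ∀ kl, 0 ≤ m kl := fun _ => mul_nonneg measureReal_nonneg measureReal_nonneg
  calc (∑ k ∈ s, ∑ l ∈ t, d (k, l) * m (k, l)) ^ 2
      = (∑ kl ∈ s ×ˢ t, d kl * m kl) ^ 2 := by rw [Finset.sum_product]
    _ ≤ (∑ kl ∈ s ×ˢ t, m kl) * ∑ kl ∈ s ×ˢ t, d kl ^ 2 * m kl :=
        Finset.sum_sq_le_sum_mul_sum_of_sq_le_mul _ (fun kl _ => hm kl)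
          (fun kl _ => mul_nonneg (sq_nonneg _) (hm kl)) fun kl _ => le_of_eq (by ring)
    _ ≤ (∑ kl ∈ s ×ˢ t, m kl) * ∑ kl, d kl ^ 2 * m kl :=
        mul_le_mul_of_nonneg_left (Finset.sum_le_sum_of_subset_of_nonneg (Finset.subset_univ _)
          fun kl _ _ => mul_nonneg (sq_nonneg _) (hm kl)) (Finset.sum_nonneg fun kl _ => hm kl)
    _ = _ := by
        congr 1
        · rw [Finset.sum_product, Finset.sum_mul_sum]
        · exact Fintype.sum_prod_type _

theorem energy_add_sq_le_energy_refine [IsProbabilityMeasure μ]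
    (hA : IsMeasurablePartition A Ω) (hWi : IntegrableOn (uncurry W) (Ω ×ˢ Ω) (μ.prod μ))
    (hS : MeasurableSet S) (hT : MeasurableSet T) (hSΩ : S ⊆ Ω) (hTΩ : T ⊆ Ω) {ε : ℝ}
    (hε : 0 ≤ ε) (hcut : ε ≤ |∫ p in S ×ˢ T, (uncurry W - stepApprox μ W A) p ∂μ.prod μ|) :
    energy μ W A + ε ^ 2 ≤ energy μ W (refine (refine A S) T) := by
  classical
  have hAS := hA.refine hS
  have hQ := hAS.refine hT
  have hQA : ∀ q, refine (refine A S) T q ⊆ A q.1.1 :=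
    fun q => inter_subset_left.trans inter_subset_left
  have hcs := sq_setIntegral_sub_stepApprox_le hA hQ hQA hWi
    (Finset.univ.filter (·.1 ∈ Finset.univ.filter (·.2))) (Finset.univ.filter (·.2))
  rw [iUnion_refine_fst_mem, hA.iUnion_refine_snd hSΩ, hAS.iUnion_refine_snd hTΩ] at hcs
  have hgap := energy_le_energy_of_refines hA hQ hQA hWi
  have hε2 : ε ^ 2 ≤ (∫ p in S ×ˢ T, (uncurry W - stepApprox μ W A) p ∂μ.prod μ) ^ 2 :=
    (pow_le_pow_left₀ hε hcut 2).trans_eq (sq_abs _)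
  have hST : μ.real S * μ.real T ≤ 1 :=
    mul_le_one₀ measureReal_le_one measureReal_nonneg measureReal_le_one
  nlinarith

theorem cutNormLE_sub_stepApprox_one [IsProbabilityMeasure μ] (hA : IsMeasurablePartition A Ω)
    (hW : ∀ x ∈ Ω, ∀ y ∈ Ω, W x y ∈ Icc 0 1) : CutNormLE μ Ω (uncurry W - stepApprox μ W A) 1 := by
  intro S T _ _ hSΩ hTΩ
  refine (abs_setIntegral_prod_le_of_abs_le_one fun p hp => ?_).trans
    (mul_le_one₀ measureReal_le_one measureReal_nonneg measureReal_le_one)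
  have hpΩ : p ∈ Ω ×ˢ Ω := prod_mono hSΩ hTΩ hp
  obtain ⟨hW0, hW1⟩ := hW p.1 hpΩ.1 p.2 hpΩ.2
  obtain ⟨hA0, hA1⟩ := stepApprox_mem_Icc (μ := μ) hA hW hpΩ
  exact abs_sub_le_iff.2 ⟨by simp only [uncurry]; linarith, by simp only [uncurry]; linarith⟩

theorem exists_partition_cutNormLE_or_le_energy [IsProbabilityMeasure μ] (hΩ : MeasurableSet Ω)
    (hWi : IntegrableOn (uncurry W) (Ω ×ˢ Ω) (μ.prod μ)) {ε : ℝ} (hε : 0 ≤ ε) (t : ℕ) :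
    ∃ (ι : Type) (_ : Fintype ι) (A : ι → Set X), IsMeasurablePartition A Ω ∧
      Fintype.card ι ≤ 4 ^ t ∧
      (CutNormLE μ Ω (uncurry W - stepApprox μ W A) ε ∨ t * ε ^ 2 ≤ energy μ W A) := by
  induction t with
  | zero =>
    exact ⟨Unit, inferInstance, fun _ => Ω, isMeasurablePartition_const hΩ, by simp,
      Or.inr (by simpa using energy_nonneg)⟩
  | succ t ih =>
    obtain ⟨ι, _, A, hA, hcard, hprev⟩ := ih
    by_cases hgood : CutNormLE μ Ω (uncurry W - stepApprox μ W A) ε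
    · exact ⟨ι, _, A, hA, hcard.trans (pow_le_pow_right₀ (by norm_num) t.le_succ), Or.inl hgood⟩
    have henergy := hprev.resolve_left hgood
    simp only [CutNormLE, not_forall, not_le] at hgood
    obtain ⟨S, T, hS, hT, hSΩ, hTΩ, hcut⟩ := hgood
    refine ⟨(ι × Bool) × Bool, inferInstance, refine (refine A S) T, (hA.refine hS).refine hT,
      ?_, Or.inr ?_⟩
    · simp only [Fintype.card_prod, Fintype.card_bool, pow_succ]
      omega
    · have := energy_add_sq_le_energy_refine hA hWi hS hT hSΩ hTΩ hε hcut.le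
      push_cast
      linarith

theorem exists_partition_cutNormLE [IsProbabilityMeasure μ] (hΩ : MeasurableSet Ω)
    (hWm : Measurable (uncurry W)) (hW : ∀ x ∈ Ω, ∀ y ∈ Ω, W x y ∈ Icc 0 1) {ε : ℝ} (hε : 0 ≤ ε)
    {t : ℕ} (ht : 1 < t * ε ^ 2) :
    ∃ (ι : Type) (_ : Fintype ι) (A : ι → Set X), IsMeasurablePartition A Ω ∧
      Fintype.card ι ≤ 4 ^ t ∧ CutNormLE μ Ω (uncurry W - stepApprox μ W A) ε := by
  obtain ⟨ι, _, A, hA, hcard, hgood | henergy⟩ := exists_partition_cutNormLE_or_le_energy hΩ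
    (integrableOn_uncurry_of_mem_Icc (μ := μ) hΩ hWm hW) hε t
  · exact ⟨ι, _, A, hA, hcard, hgood⟩
  · linarith [energy_le_one (μ := μ) hA hW]

theorem exists_partition_card_le_cutNormLE_two_div_sqrt_log [IsProbabilityMeasure μ]
    (hΩ : MeasurableSet Ω) (hWm : Measurable (uncurry W)) (hW : ∀ x ∈ Ω, ∀ y ∈ Ω, W x y ∈ Icc 0 1)
    {K : ℕ} (hK : 2 ≤ K) :
    ∃ (ι : Type) (_ : Fintype ι) (A : ι → Set X), IsMeasurablePartition A Ω ∧
      Fintype.card ι ≤ K ∧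
      CutNormLE μ Ω (uncurry W - stepApprox μ W A) (2 / √(Real.log K)) := by
  have hL : 0 < Real.log K := Real.log_pos (by exact_mod_cast hK)
  by_cases hL4 : Real.log K ≤ 4
  · have hε : 1 ≤ 2 / √(Real.log K) := by
      rw [one_le_div (by positivity), Real.sqrt_le_left (by norm_num)]
      linarith
    exact ⟨Unit, inferInstance, fun _ => Ω, isMeasurablePartition_const hΩ, by simp; omega,
      (cutNormLE_sub_stepApprox_one (isMeasurablePartition_const hΩ) hW).mono hε⟩
  · obtain ⟨t, hLt, htK⟩ := exists_four_pow_le_of_four_lt_log (not_le.1 hL4)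
    have ht : 1 < t * (2 / √(Real.log K)) ^ 2 := by
      rw [div_pow, Real.sq_sqrt hL.le, mul_div_assoc', one_lt_div hL]
      linarith
    obtain ⟨ι, _, A, hA, hcard, hgood⟩ :=
      exists_partition_cutNormLE (μ := μ) hΩ hWm hW (by positivity) ht
    exact ⟨ι, _, A, hA, hcard.trans htK, hgood⟩

end Graphon

open Graphon

/-- **Weak Regularity Lemma for graphons.**
For every graphon `W : [0,1]² → [0,1]` (a symmetric Lebesgue-measurable function) and every
`K ≥ 2`, there is a measurable partition `P = (P₁, …, P_K)` of `[0,1]` into `K` measurable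
subsets and symmetric coefficients `w k k' ∈ [0,1]` such that the step function
`W_P(x,y) = Σ_{k,k'} w_{kk'} 𝟙_{P_k × P_{k'}}(x,y)` satisfies
`‖W − W_P‖_□ ≤ 2/√(log K)`, i.e. for all measurable `S, T ⊆ [0,1]`,
`|∫_{S×T} (W − W_P)| ≤ 2/√(log K)`. -/
theorem weak_regularity_lemma_graphon
    (W : ℝ → ℝ → ℝ)
    (hW_meas : Measurable (fun p : ℝ × ℝ => W p.1 p.2))
    (hW_symm : ∀ x y, W x y = W y x)
    (hW_range : ∀ x ∈ Set.Icc (0:ℝ) 1, ∀ y ∈ Set.Icc (0:ℝ) 1, W x y ∈ Set.Icc (0:ℝ) 1)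
    (K : ℕ) (hK : 2 ≤ K) :
    ∃ P : Fin K → Set ℝ,
      (∀ k, MeasurableSet (P k)) ∧
      (Pairwise (Function.onFun Disjoint P)) ∧
      (⋃ k, P k) = Set.Icc (0:ℝ) 1 ∧
      ∃ w : Fin K → Fin K → ℝ,
        (∀ k k', w k k' ∈ Set.Icc (0:ℝ) 1) ∧
        (∀ k k', w k k' = w k' k) ∧
        ∀ S T : Set ℝ, MeasurableSet S → MeasurableSet T →
          S ⊆ Set.Icc (0:ℝ) 1 → T ⊆ Set.Icc (0:ℝ) 1 →
          |∫ p in S ×ˢ T,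
              (W p.1 p.2 -
                ∑ k : Fin K, ∑ k' : Fin K,
                  Set.indicator ((P k) ×ˢ (P k')) (fun _ => w k k') p)|
            ≤ 2 / Real.sqrt (Real.log K) := by
  let μ := volume.restrict (Icc (0 : ℝ) 1)
  have : IsProbabilityMeasure μ := ⟨by simp [μ]⟩
  obtain ⟨ι, _, A, hA, hcard, hcut⟩ :=
    exists_partition_card_le_cutNormLE_two_div_sqrt_log (μ := μ) measurableSet_Icc hW_meas
      hW_range hK
  obtain ⟨e⟩ : Nonempty (ι ↪ Fin K) := Embedding.nonempty_of_card_le (by simpa using hcard)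
  have hP := hA.extend e.injective
  refine ⟨_, hP.measurableSet, hP.pairwiseDisjoint, hP.iUnion_eq, blockAvg μ W _,
    blockAvg_mem_Icc hP hW_range, blockAvg_comm hW_symm _, fun S T hS hT hSΩ hTΩ => ?_⟩
  have h := hcut S T hS hT hSΩ hTΩ
  rw [← stepApprox_extend_empty e.injective, setIntegral_prod_restrict_of_subset hS hT hSΩ hTΩ,
    ← Measure.volume_eq_prod] at h
  exact h
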